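/- arXiv:2112.14004 — 3 statements merged into one kernel-verified Lean document; each statement's English description precedes it below -/
import Mathlib

section
/- Assume ν₀ has full support and the expert π_E is optimal for RL with cost c_{w_true} where w_true ∈ Δ_{[n_c]}. A pair (u_A, w_A) is optimal for the dual LP: maximize ⟨μ_{π_E}, T*_γ u - c_w⟩ subject to c_w - T*_γ u ≥ 0, w ∈ Δ_{[n_c]}, if and only if w_A ∈ Δ_{[n_c]}, π_E is optimal for the forward RL problem with cost c_{w_A}, and u_A equals the optimal value function V*_{w_A}. In particular (V*_{w_true}, w_true) is dual optimal. -/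
open Finset

variable {X A : Type*} [Fintype X] [Fintype A] [DecidableEq X] [DecidableEq A]
  [Nonempty X] [Nonempty A]

/-- A finite discounted Markov decision process. -/
structure FinMDP (X A : Type*) [Fintype X] [Fintype A] where
  P : X → A → X → ℝ
  P_nonneg : ∀ x a x', 0 ≤ P x a x'
  P_sum : ∀ x a, ∑ x', P x a x' = 1
  ν : X → ℝ
  ν_nonneg : ∀ x, 0 ≤ ν x
  ν_sum : ∑ x, ν x = 1
  γ : ℝ
  γ_pos : 0 < γ
  γ_lt_one : γ < 1

/-- A stationary Markov policy. -/
def FinMDP.IsPolicy (π : X → A → ℝ) : Prop :=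
  (∀ x a, 0 ≤ π x a) ∧ ∀ x, ∑ a, π x a = 1

namespace FinMDP

variable (M : FinMDP X A)

/-- The state-action distribution at time `t` of policy `π` started from `ν'`. -/
noncomputable def saDist (ν' : X → ℝ) (π : X → A → ℝ) : ℕ → X × A → ℝ
  | 0 => fun p => ν' p.1 * π p.1 p.2
  | t + 1 => fun p => (∑ q : X × A, saDist ν' π t q * M.P q.1 q.2 p.1) * π p.1 p.2

/-- The normalized discounted occupancy measure of `π` started from `ν'`. -/
noncomputable def occFrom (ν' : X → ℝ) (π : X → A → ℝ) (p : X × A) : ℝ :=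
  (1 - M.γ) * ∑' t : ℕ, M.γ ^ t * M.saDist ν' π t p

/-- The normalized discounted occupancy measure of `π` (from the initial distribution). -/
noncomputable def occ (π : X → A → ℝ) : X × A → ℝ :=
  M.occFrom M.ν π

/-- The (normalized) value function of policy `π` for cost `c`. -/
noncomputable def value (c : X × A → ℝ) (π : X → A → ℝ) (x : X) : ℝ :=
  ∑ p : X × A, M.occFrom (fun y => if y = x then 1 else 0) π p * c p

/-- The total expected (normalized) discounted cost `ρ_c(π) = ⟨μ_π, c⟩`. -/
noncomputable def cost (c : X × A → ℝ) (π : X → A → ℝ) : ℝ :=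
  ∑ p : X × A, M.occ π p * c p

/-- The Bellman flow operator `T_γ μ = (1/(1-γ)) (B - γ P)ᵀ μ`. -/
noncomputable def Tflow (μ : X × A → ℝ) (x' : X) : ℝ :=
  (1 / (1 - M.γ)) * ((∑ a, μ (x', a)) - M.γ * ∑ p : X × A, μ p * M.P p.1 p.2 x')

/-- The adjoint operator `T*_γ u = (1/(1-γ)) (B - γ P) u`. -/
noncomputable def Tadj (u : X → ℝ) (p : X × A) : ℝ :=
  (1 / (1 - M.γ)) * (u p.1 - M.γ * ∑ x', M.P p.1 p.2 x' * u x')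

/-- `π` is an optimal policy for the forward RL problem with cost `c`. -/
def IsOptimal (c : X × A → ℝ) (π : X → A → ℝ) : Prop :=
  IsPolicy π ∧ ∀ π', IsPolicy π' → M.cost c π ≤ M.cost c π'

/-- The optimal value function `V*_c(x) = min_π V_c^π(x)`. -/
noncomputable def Vstar (c : X × A → ℝ) (x : X) : ℝ :=
  sInf {v | ∃ π, IsPolicy π ∧ v = M.value c π x}

end FinMDP

/-- The policy induced by a state-action distribution:
`π_μ(a|x) = μ(x,a) / ∑_{a'} μ(x,a')` (uniform on zero-mass states). -/
noncomputable def inducedPolicy (μ : X × A → ℝ) (x : X) (a : A) : ℝ :=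
  if (∑ a' : A, μ (x, a')) = 0 then (1 : ℝ) / (Fintype.card A)
  else μ (x, a) / ∑ a' : A, μ (x, a')

/-- `μ` is a probability distribution on state-action pairs. -/
def IsDist (μ : X × A → ℝ) : Prop := (∀ p, 0 ≤ μ p) ∧ ∑ p : X × A, μ p = 1

/-- Membership in the probability simplex `Δ_{[n]}`. -/
def simplexPt {n : ℕ} (w : Fin n → ℝ) : Prop := (∀ i, 0 ≤ w i) ∧ ∑ i, w i = 1

/-- The `ℓ¹` norm of a finitely supported vector. -/
noncomputable def l1 {ι : Type*} [Fintype ι] (f : ι → ℝ) : ℝ := ∑ i, |f i|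

/-- The `ℓ∞` norm of a finitely supported vector. -/
noncomputable def linf {ι : Type*} [Fintype ι] [Nonempty ι] (f : ι → ℝ) : ℝ :=
  Finset.univ.sup' Finset.univ_nonempty fun i => |f i|

/-- The cost `c_w = ∑ᵢ wᵢ cᵢ` parameterized by weights `w`. -/
noncomputable def costW {nc : ℕ} (c : Fin nc → X × A → ℝ) (w : Fin nc → ℝ) :
    X × A → ℝ :=
  fun p => ∑ i, w i * c i p

/-- The objective of the dual LP `(D_{π_E})`. -/
noncomputable def dualObj {nc : ℕ} (M : FinMDP X A) (c : Fin nc → X × A → ℝ)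
    (πE : X → A → ℝ) (u : X → ℝ) (w : Fin nc → ℝ) : ℝ :=
  ∑ p : X × A, M.occ πE p * (M.Tadj u p - costW c w p)

/-- Feasibility for the dual LP `(D_{π_E})`. -/
def dualFeasible {nc : ℕ} (M : FinMDP X A) (c : Fin nc → X × A → ℝ)
    (u : X → ℝ) (w : Fin nc → ℝ) : Prop :=
  simplexPt w ∧ ∀ p, 0 ≤ costW c w p - M.Tadj u p

/-- Optimality for the dual LP `(D_{π_E})`. -/
def dualOptimal {nc : ℕ} (M : FinMDP X A) (c : Fin nc → X × A → ℝ)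
    (πE : X → A → ℝ) (u : X → ℝ) (w : Fin nc → ℝ) : Prop :=
  dualFeasible M c u w ∧
    ∀ u' w', dualFeasible M c u' w' → dualObj M c πE u' w' ≤ dualObj M c πE u w

/-- The `C`-distance `δ_C(π, π_E) = max_i (ρ_{c_i}(π) - ρ_{c_i}(π_E))`. -/
noncomputable def gapMax {nc : ℕ} [NeZero nc] (M : FinMDP X A)
    (c : Fin nc → X × A → ℝ) (πE π : X → A → ℝ) : ℝ :=
  haveI : Nonempty (Fin nc) := ⟨⟨0, Nat.pos_of_ne_zero (NeZero.ne nc)⟩⟩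
  Finset.univ.sup' Finset.univ_nonempty fun i => M.cost (c i) π - M.cost (c i) πE

/-- `π_A` is an apprentice policy: it minimizes `δ_C(·, π_E)` over stationary policies. -/
def IsApprentice {nc : ℕ} [NeZero nc] (M : FinMDP X A)
    (c : Fin nc → X × A → ℝ) (πE πA : X → A → ℝ) : Prop :=
  FinMDP.IsPolicy πA ∧
    ∀ π, FinMDP.IsPolicy π → gapMax M c πE πA ≤ gapMax M c πE π

/-- The parameter set `Λ = {λ : ‖λ‖₂ ≤ β/√n_u}`. -/
def lamSet (nu : ℕ) (β : ℝ) : Set (Fin nu → ℝ) :=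
  {l | Real.sqrt (∑ k, l k ^ 2) ≤ β / Real.sqrt nu}

/-- The reduced Lagrangian `L_r(θ, λ, w) = ⟨μ_θ - μ_{π_E}, c_w - T*_γ u_λ⟩`. -/
noncomputable def Lr {nm nu nc : ℕ} (M : FinMDP X A)
    (Φ : Fin nm → X × A → ℝ) (Ψ : Fin nu → X → ℝ) (c : Fin nc → X × A → ℝ)
    (πE : X → A → ℝ) (θ : Fin nm → ℝ) (lam : Fin nu → ℝ) (w : Fin nc → ℝ) : ℝ :=
  ∑ p : X × A, ((∑ i, θ i * Φ i p) - M.occ πE p) *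
    ((∑ j, w j * c j p) - M.Tadj (fun x => ∑ k, lam k * Ψ k x) p)

/-- The saddle-point residual of a point `(θ, λ, w)` for the reduced Lagrangian. -/
noncomputable def epsSad {nm nu nc : ℕ} (M : FinMDP X A)
    (Φ : Fin nm → X × A → ℝ) (Ψ : Fin nu → X → ℝ) (c : Fin nc → X × A → ℝ)
    (πE : X → A → ℝ) (β : ℝ)
    (θ : Fin nm → ℝ) (lam : Fin nu → ℝ) (w : Fin nc → ℝ) : ℝ :=
  sSup {v | ∃ lam' ∈ lamSet nu β, ∃ w', simplexPt w' ∧ v = Lr M Φ Ψ c πE θ lam' w'} -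
    sInf {v | ∃ θ', simplexPt θ' ∧ v = Lr M Φ Ψ c πE θ' lam w}

set_option linter.unusedSectionVars false

namespace FinMDP

section Aux

variable (M : FinMDP X A) {ν' : X → ℝ} {π : X → A → ℝ}

/-- `ν'` is a distribution on states. -/
def IsSDist (ν' : X → ℝ) : Prop := (∀ x, 0 ≤ ν' x) ∧ ∑ x, ν' x = 1

lemma isSDist_delta (x : X) : IsSDist (fun y => if y = x then (1:ℝ) else 0) := by
  constructor
  · intro y; by_cases h : y = x <;> simp [h]
  · simp

lemma saDist_nonneg (hν : ∀ x, 0 ≤ ν' x) (hπ : IsPolicy π) :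
    ∀ t p, 0 ≤ M.saDist ν' π t p := by
  intro t
  induction t with
  | zero => intro p; exact mul_nonneg (hν _) (hπ.1 _ _)
  | succ t ih =>
    intro p
    refine mul_nonneg (Finset.sum_nonneg fun q _ => mul_nonneg (ih q) (M.P_nonneg _ _ _)) (hπ.1 _ _)

lemma saDist_sum (hν : IsSDist ν') (hπ : IsPolicy π) :
    ∀ t, ∑ p : X × A, M.saDist ν' π t p = 1 := by
  intro t
  induction t with
  | zero =>
    simp only [saDist, Fintype.sum_prod_type]
    rw [← hν.2]
    refine Finset.sum_congr rfl fun x _ => ?_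
    rw [← Finset.mul_sum, hπ.2, mul_one]
  | succ t ih =>
    rw [Fintype.sum_prod_type]
    simp only [saDist]
    calc ∑ x : X, ∑ a : A, (∑ q : X × A, M.saDist ν' π t q * M.P q.1 q.2 x) * π x a
        = ∑ x : X, ∑ q : X × A, M.saDist ν' π t q * M.P q.1 q.2 x := by
          refine Finset.sum_congr rfl fun x _ => ?_
          rw [← Finset.mul_sum, hπ.2, mul_one]
      _ = ∑ q : X × A, ∑ x : X, M.saDist ν' π t q * M.P q.1 q.2 x := Finset.sum_comm
      _ = ∑ q : X × A, M.saDist ν' π t q := by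
          refine Finset.sum_congr rfl fun q _ => ?_
          rw [← Finset.mul_sum, M.P_sum, mul_one]
      _ = 1 := ih

lemma saDist_le_one (hν : IsSDist ν') (hπ : IsPolicy π) (t : ℕ) (p : X × A) :
    M.saDist ν' π t p ≤ 1 := by
  have h := M.saDist_sum hν hπ t
  calc M.saDist ν' π t p ≤ ∑ q : X × A, M.saDist ν' π t q :=
        Finset.single_le_sum (fun q _ => M.saDist_nonneg hν.1 hπ t q) (Finset.mem_univ p)
    _ = 1 := h

lemma summable_saDist (hν : IsSDist ν') (hπ : IsPolicy π) (p : X × A) :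
    Summable (fun t : ℕ => M.γ ^ t * M.saDist ν' π t p) := by
  refine Summable.of_nonneg_of_le
    (fun t => mul_nonneg (pow_nonneg M.γ_pos.le t) (M.saDist_nonneg hν.1 hπ t p))
    (fun t => ?_) (summable_geometric_of_lt_one M.γ_pos.le M.γ_lt_one)
  calc M.γ ^ t * M.saDist ν' π t p ≤ M.γ ^ t * 1 := by
        exact mul_le_mul_of_nonneg_left (M.saDist_le_one hν hπ t p) (pow_nonneg M.γ_pos.le t)
    _ = M.γ ^ t := mul_one _

lemma occFrom_nonneg (hν : IsSDist ν') (hπ : IsPolicy π) (p : X × A) :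
    0 ≤ M.occFrom ν' π p := by
  refine mul_nonneg (by linarith [M.γ_lt_one]) (tsum_nonneg fun t =>
    mul_nonneg (pow_nonneg M.γ_pos.le t) (M.saDist_nonneg hν.1 hπ t p))

end Aux

end FinMDP
namespace FinMDP

section Aux2

variable (M : FinMDP X A) {ν' : X → ℝ} {π : X → A → ℝ}

lemma one_sub_γ_pos : 0 < 1 - M.γ := by linarith [M.γ_lt_one]

lemma summable_geom_bdd {g : ℕ → ℝ} {C : ℝ} (h0 : ∀ t, 0 ≤ g t) (h1 : ∀ t, g t ≤ C) :
    Summable fun t => M.γ ^ t * g t := by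
  have hC : 0 ≤ C := le_trans (h0 0) (h1 0)
  refine Summable.of_nonneg_of_le
    (fun t => mul_nonneg (pow_nonneg M.γ_pos.le t) (h0 t)) (fun t => ?_)
    ((summable_geometric_of_lt_one M.γ_pos.le M.γ_lt_one).mul_right C)
  exact mul_le_mul_of_nonneg_left (h1 t) (pow_nonneg M.γ_pos.le t)

lemma marginal_nonneg (hν : IsSDist ν') (hπ : IsPolicy π) (t : ℕ) (x : X) :
    0 ≤ ∑ a, M.saDist ν' π t (x, a) :=
  Finset.sum_nonneg fun a _ => M.saDist_nonneg hν.1 hπ t _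

lemma marginal_le_one (hν : IsSDist ν') (hπ : IsPolicy π) (t : ℕ) (x : X) :
    ∑ a, M.saDist ν' π t (x, a) ≤ 1 := by
  have h := M.saDist_sum hν hπ t
  calc ∑ a, M.saDist ν' π t (x, a)
      ≤ ∑ y : X, ∑ a, M.saDist ν' π t (y, a) :=
        Finset.single_le_sum (fun y _ => M.marginal_nonneg hν hπ t y) (Finset.mem_univ x)
    _ = 1 := by rw [← Fintype.sum_prod_type, h]

lemma marginal_succ (hπ : IsPolicy π) (t : ℕ) (x' : X) :
    ∑ a, M.saDist ν' π (t + 1) (x', a) = ∑ q : X × A, M.saDist ν' π t q * M.P q.1 q.2 x' := by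
  simp only [saDist]
  rw [← Finset.mul_sum, hπ.2, mul_one]

/-- The Bellman flow equation `T_γ μ_π = ν'`. -/
lemma Tflow_occFrom (hν : IsSDist ν') (hπ : IsPolicy π) (x' : X) :
    M.Tflow (M.occFrom ν' π) x' = ν' x' := by
  set m : ℕ → ℝ := fun t => ∑ a, M.saDist ν' π t (x', a) with hm
  have hsumm : Summable fun t => M.γ ^ t * m t :=
    M.summable_geom_bdd (M.marginal_nonneg hν hπ · x') (M.marginal_le_one hν hπ · x')
  have hsumm' : Summable fun t => M.γ ^ t * m (t + 1) :=
    M.summable_geom_bdd (fun t => M.marginal_nonneg hν hπ (t+1) x')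
      (fun t => M.marginal_le_one hν hπ (t+1) x')
  have h1 : ∑ a, M.occFrom ν' π (x', a) = (1 - M.γ) * ∑' t, M.γ ^ t * m t := by
    simp only [occFrom]
    rw [← Finset.mul_sum, ← Summable.tsum_finsetSum (fun a _ => M.summable_saDist hν hπ (x', a))]
    congr 1
    refine tsum_congr fun t => ?_
    rw [hm, Finset.mul_sum]
  have h2 : ∑ p : X × A, M.occFrom ν' π p * M.P p.1 p.2 x'
      = (1 - M.γ) * ∑' t, M.γ ^ t * m (t + 1) := by
    simp only [occFrom]
    have : ∀ p : X × A, ((1 - M.γ) * ∑' t, M.γ ^ t * M.saDist ν' π t p) * M.P p.1 p.2 x'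
        = (1 - M.γ) * ∑' t, M.γ ^ t * M.saDist ν' π t p * M.P p.1 p.2 x' := by
      intro p
      rw [mul_assoc, ← tsum_mul_right]
    rw [Finset.sum_congr rfl fun p _ => this p, ← Finset.mul_sum,
      ← Summable.tsum_finsetSum (fun p _ => (M.summable_saDist hν hπ p).mul_right _)]
    congr 1
    refine tsum_congr fun t => ?_
    show ∑ i : X × A, M.γ ^ t * M.saDist ν' π t i * M.P i.1 i.2 x'
        = M.γ ^ t * ∑ a, M.saDist ν' π (t + 1) (x', a)
    rw [M.marginal_succ hπ t x', Finset.mul_sum]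
    exact Finset.sum_congr rfl fun q _ => by ring
  have h3 : (∑' t, M.γ ^ t * m t) - M.γ * ∑' t, M.γ ^ t * m (t + 1) = m 0 := by
    have hshift : ∑' t, M.γ ^ t * m t = m 0 + ∑' t, M.γ ^ (t + 1) * m (t + 1) := by
      rw [Summable.tsum_eq_zero_add hsumm]
      simp
    have : M.γ * ∑' t, M.γ ^ t * m (t + 1) = ∑' t, M.γ ^ (t + 1) * m (t + 1) := by
      rw [← tsum_mul_left]
      exact tsum_congr fun t => by ring
    rw [this, hshift]
    ring
  have hm0 : m 0 = ν' x' := by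
    simp only [hm, saDist]
    rw [← Finset.mul_sum, hπ.2, mul_one]
  have hne : (1 - M.γ) ≠ 0 := ne_of_gt M.one_sub_γ_pos
  simp only [Tflow]
  rw [h1, h2]
  have key : (1 - M.γ) * (∑' t, M.γ ^ t * m t) - M.γ * ((1 - M.γ) * ∑' t, M.γ ^ t * m (t + 1))
      = (1 - M.γ) * ν' x' := by
    rw [← hm0, ← h3]; ring
  rw [key]
  field_simp

end Aux2

end FinMDP
namespace FinMDP

section Aux3

variable (M : FinMDP X A) {ν' : X → ℝ} {π : X → A → ℝ}

lemma pairing_all (μ : X × A → ℝ) (u : X → ℝ) :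
    ∑ p : X × A, μ p * M.Tadj u p = ∑ x, M.Tflow μ x * u x := by
  have l1 : ∑ p : X × A, μ p * u p.1 = ∑ x, (∑ a, μ (x, a)) * u x := by
    rw [Fintype.sum_prod_type]
    exact Finset.sum_congr rfl fun x _ => by rw [Finset.sum_mul]
  have l2 : ∑ p : X × A, μ p * ∑ x', M.P p.1 p.2 x' * u x'
      = ∑ x', (∑ p : X × A, μ p * M.P p.1 p.2 x') * u x' := by
    simp only [Finset.mul_sum, Finset.sum_mul]
    rw [Finset.sum_comm]
    exact Finset.sum_congr rfl fun x' _ => Finset.sum_congr rfl fun p _ => by ring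
  calc ∑ p : X × A, μ p * M.Tadj u p
      = ∑ p : X × A, (1 / (1 - M.γ) * (μ p * u p.1)
          - 1 / (1 - M.γ) * M.γ * (μ p * ∑ x', M.P p.1 p.2 x' * u x')) :=
        Finset.sum_congr rfl fun p _ => by simp only [Tadj]; ring
    _ = 1 / (1 - M.γ) * (∑ p : X × A, μ p * u p.1)
          - 1 / (1 - M.γ) * M.γ * ∑ p : X × A, μ p * ∑ x', M.P p.1 p.2 x' * u x' := by
        rw [Finset.sum_sub_distrib, Finset.mul_sum, Finset.mul_sum]
    _ = 1 / (1 - M.γ) * (∑ x, (∑ a, μ (x, a)) * u x)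
          - 1 / (1 - M.γ) * M.γ * ∑ x, (∑ p : X × A, μ p * M.P p.1 p.2 x) * u x := by
        rw [l1, l2]
    _ = ∑ x, (1 / (1 - M.γ) * ((∑ a, μ (x, a)) * u x)
          - 1 / (1 - M.γ) * M.γ * ((∑ p : X × A, μ p * M.P p.1 p.2 x) * u x)) := by
        rw [Finset.sum_sub_distrib, Finset.mul_sum, Finset.mul_sum]
    _ = ∑ x, M.Tflow μ x * u x :=
        Finset.sum_congr rfl fun x _ => by simp only [Tflow]; ring

/-- Pairing with the occupancy measure: `⟨μ_π, T*u⟩ = ⟨ν', u⟩`. -/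
lemma pairing (hν : IsSDist ν') (hπ : IsPolicy π) (u : X → ℝ) :
    ∑ p : X × A, M.occFrom ν' π p * M.Tadj u p = ∑ x, ν' x * u x := by
  rw [M.pairing_all]
  exact Finset.sum_congr rfl fun x _ => by rw [M.Tflow_occFrom hν hπ]

lemma pairing_delta (hπ : IsPolicy π) (u : X → ℝ) (x : X) :
    ∑ p : X × A, M.occFrom (fun y => if y = x then 1 else 0) π p * M.Tadj u p = u x := by
  rw [M.pairing (isSDist_delta x) hπ]
  simp

end Aux3

end FinMDP
namespace FinMDP

section Aux4

variable (M : FinMDP X A) {ν' : X → ℝ} {π : X → A → ℝ}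

lemma isSDist_ν : IsSDist M.ν := ⟨M.ν_nonneg, M.ν_sum⟩

lemma saDist_linear (t : ℕ) (p : X × A) :
    M.saDist ν' π t p
      = ∑ x, ν' x * M.saDist (fun y => if y = x then 1 else 0) π t p := by
  induction t generalizing p with
  | zero =>
    simp only [saDist]
    rw [Finset.sum_eq_single p.1 (fun x _ hx => by simp [Ne.symm hx]) (by simp)]
    simp
  | succ t ih =>
    simp only [saDist]
    calc (∑ q : X × A, M.saDist ν' π t q * M.P q.1 q.2 p.1) * π p.1 p.2
        = (∑ q : X × A, (∑ x, ν' x * M.saDist (fun y => if y = x then 1 else 0) π t q)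
            * M.P q.1 q.2 p.1) * π p.1 p.2 := by
          congr 1
          exact Finset.sum_congr rfl fun q _ => by rw [ih q]
      _ = (∑ x, ∑ q : X × A, ν' x * (M.saDist (fun y => if y = x then 1 else 0) π t q
            * M.P q.1 q.2 p.1)) * π p.1 p.2 := by
          congr 1
          rw [Finset.sum_comm]
          exact Finset.sum_congr rfl fun q _ => by
            rw [Finset.sum_mul]
            exact Finset.sum_congr rfl fun x _ => by ring
      _ = ∑ x, ν' x * ((∑ q : X × A, M.saDist (fun y => if y = x then 1 else 0) π t q
            * M.P q.1 q.2 p.1) * π p.1 p.2) := by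
          rw [Finset.sum_mul]
          exact Finset.sum_congr rfl fun x _ => by rw [← Finset.mul_sum]; ring

lemma occFrom_linear (hπ : IsPolicy π) (p : X × A) :
    M.occFrom ν' π p
      = ∑ x, ν' x * M.occFrom (fun y => if y = x then 1 else 0) π p := by
  simp only [occFrom]
  calc (1 - M.γ) * ∑' t, M.γ ^ t * M.saDist ν' π t p
      = (1 - M.γ) * ∑' t, ∑ x, ν' x
          * (M.γ ^ t * M.saDist (fun y => if y = x then 1 else 0) π t p) := by
        congr 1
        refine tsum_congr fun t => ?_
        rw [M.saDist_linear t p, Finset.mul_sum]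
        exact Finset.sum_congr rfl fun x _ => by ring
    _ = (1 - M.γ) * ∑ x, ∑' t, ν' x
          * (M.γ ^ t * M.saDist (fun y => if y = x then 1 else 0) π t p) := by
        rw [Summable.tsum_finsetSum]
        intro x _
        exact (M.summable_saDist (isSDist_delta x) hπ p).mul_left _
    _ = ∑ x, ν' x * ((1 - M.γ)
          * ∑' t, M.γ ^ t * M.saDist (fun y => if y = x then 1 else 0) π t p) := by
        rw [Finset.mul_sum]
        exact Finset.sum_congr rfl fun x _ => by rw [tsum_mul_left]; ring

lemma cost_eq_sum_value (hπ : IsPolicy π) (c : X × A → ℝ) :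
    M.cost c π = ∑ x, M.ν x * M.value c π x := by
  simp only [cost, value, occ]
  calc ∑ p : X × A, M.occFrom M.ν π p * c p
      = ∑ p : X × A, ∑ x, M.ν x
          * (M.occFrom (fun y => if y = x then 1 else 0) π p * c p) := by
        refine Finset.sum_congr rfl fun p _ => ?_
        rw [M.occFrom_linear hπ p, Finset.sum_mul]
        exact Finset.sum_congr rfl fun x _ => by ring
    _ = ∑ x, M.ν x * ∑ p : X × A, M.occFrom (fun y => if y = x then 1 else 0) π p * c p := by
        rw [Finset.sum_comm]
        exact Finset.sum_congr rfl fun x _ => by rw [← Finset.mul_sum]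

lemma occFrom_marg (hν : IsSDist ν') (hπ : IsPolicy π) (x : X) :
    ∑ a, M.occFrom ν' π (x, a)
      = (1 - M.γ) * ∑' t, M.γ ^ t * ∑ a, M.saDist ν' π t (x, a) := by
  simp only [occFrom]
  rw [← Finset.mul_sum, ← Summable.tsum_finsetSum (fun a _ => M.summable_saDist hν hπ (x, a))]
  congr 1
  exact tsum_congr fun t => by rw [Finset.mul_sum]

lemma saDist_fst (hπ : IsPolicy π) (t : ℕ) (x : X) (a : A) :
    M.saDist ν' π t (x, a) = (∑ a', M.saDist ν' π t (x, a')) * π x a := by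
  cases t with
  | zero =>
    simp only [saDist]
    rw [← Finset.mul_sum, hπ.2, mul_one]
  | succ t =>
    simp only [saDist]
    rw [← Finset.mul_sum, hπ.2, mul_one]

lemma occFrom_fst (hν : IsSDist ν') (hπ : IsPolicy π) (x : X) (a : A) :
    M.occFrom ν' π (x, a) = (∑ a', M.occFrom ν' π (x, a')) * π x a := by
  rw [M.occFrom_marg hν hπ x]
  simp only [occFrom]
  rw [mul_assoc]
  congr 1
  rw [← tsum_mul_right]
  refine tsum_congr fun t => ?_
  rw [M.saDist_fst hπ t x a]
  ring

/-- `V^π(x) - u(x) = ⟨μ^x_π, c - T*u⟩`. -/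
lemma value_sub (hπ : IsPolicy π) (c : X × A → ℝ) (u : X → ℝ) (x : X) :
    M.value c π x - u x
      = ∑ p : X × A, M.occFrom (fun y => if y = x then 1 else 0) π p
          * (c p - M.Tadj u p) := by
  simp only [value]
  rw [← M.pairing_delta hπ u x, ← Finset.sum_sub_distrib]
  exact Finset.sum_congr rfl fun p _ => by ring

end Aux4

end FinMDP
namespace FinMDP

section Aux5

variable (M : FinMDP X A) {π : X → A → ℝ}

/-- The Bellman optimality operator. -/
noncomputable def Lop (c : X × A → ℝ) (v : X → ℝ) (x : X) : ℝ :=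
  Finset.univ.inf' Finset.univ_nonempty fun a =>
    (1 - M.γ) * c (x, a) + M.γ * ∑ x', M.P x a x' * v x'

lemma Lop_sub_le (c : X × A → ℝ) (v w : X → ℝ) (x : X) :
    M.Lop c v x - M.Lop c w x ≤ M.γ * dist v w := by
  obtain ⟨a₀, -, ha₀⟩ := Finset.exists_mem_eq_inf' (Finset.univ_nonempty)
    (fun a => (1 - M.γ) * c (x, a) + M.γ * ∑ x', M.P x a x' * w x')
  have h1 : M.Lop c v x ≤ (1 - M.γ) * c (x, a₀) + M.γ * ∑ x', M.P x a₀ x' * v x' :=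
    Finset.inf'_le _ (Finset.mem_univ a₀)
  have h2 : M.Lop c w x = (1 - M.γ) * c (x, a₀) + M.γ * ∑ x', M.P x a₀ x' * w x' := ha₀
  have h3 : (∑ x', M.P x a₀ x' * v x') - ∑ x', M.P x a₀ x' * w x' ≤ dist v w := by
    rw [← Finset.sum_sub_distrib]
    calc ∑ x', (M.P x a₀ x' * v x' - M.P x a₀ x' * w x')
        ≤ ∑ x', M.P x a₀ x' * dist v w := by
          refine Finset.sum_le_sum fun x' _ => ?_
          rw [← mul_sub]
          refine mul_le_mul_of_nonneg_left ?_ (M.P_nonneg _ _ _)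
          calc v x' - w x' ≤ |v x' - w x'| := le_abs_self _
            _ = dist (v x') (w x') := (Real.dist_eq _ _).symm
            _ ≤ dist v w := dist_le_pi_dist v w x'
      _ = dist v w := by rw [← Finset.sum_mul, M.P_sum, one_mul]
  have h4 := mul_le_mul_of_nonneg_left h3 M.γ_pos.le
  rw [mul_sub] at h4
  linarith

lemma Lop_lipschitz (c : X × A → ℝ) : LipschitzWith M.γ.toNNReal (M.Lop c) := by
  refine LipschitzWith.of_dist_le_mul fun v w => ?_
  have hγ : (M.γ.toNNReal : ℝ) = M.γ := Real.coe_toNNReal _ M.γ_pos.le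
  rw [hγ]
  rw [dist_pi_le_iff (mul_nonneg M.γ_pos.le dist_nonneg)]
  intro x
  rw [Real.dist_eq, abs_sub_le_iff]
  constructor
  · exact M.Lop_sub_le c v w x
  · calc M.Lop c w x - M.Lop c v x ≤ M.γ * dist w v := M.Lop_sub_le c w v x
      _ = M.γ * dist v w := by rw [dist_comm]

lemma Lop_contracting (c : X × A → ℝ) : ContractingWith M.γ.toNNReal (M.Lop c) := by
  refine ⟨?_, M.Lop_lipschitz c⟩
  rw [← Real.toNNReal_one]
  exact (Real.toNNReal_lt_toNNReal_iff (by norm_num)).mpr M.γ_lt_one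

/-- The optimal value function, as a fixed point of the Bellman operator. -/
noncomputable def vfix (c : X × A → ℝ) : X → ℝ :=
  (M.Lop_contracting c).fixedPoint (M.Lop c)

lemma Lop_vfix (c : X × A → ℝ) : M.Lop c (M.vfix c) = M.vfix c :=
  (M.Lop_contracting c).fixedPoint_isFixedPt

lemma vfix_le (c : X × A → ℝ) (x : X) (a : A) :
    M.vfix c x ≤ (1 - M.γ) * c (x, a) + M.γ * ∑ x', M.P x a x' * M.vfix c x' := by
  conv_lhs => rw [← M.Lop_vfix c]
  exact Finset.inf'_le _ (Finset.mem_univ a)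

/-- A greedy action for the fixed point. -/
noncomputable def astar (c : X × A → ℝ) (x : X) : A :=
  (Finset.exists_mem_eq_inf' Finset.univ_nonempty fun a =>
    (1 - M.γ) * c (x, a) + M.γ * ∑ x', M.P x a x' * M.vfix c x').choose

lemma vfix_eq_astar (c : X × A → ℝ) (x : X) :
    M.vfix c x = (1 - M.γ) * c (x, M.astar c x)
      + M.γ * ∑ x', M.P x (M.astar c x) x' * M.vfix c x' := by
  conv_lhs => rw [← M.Lop_vfix c]
  exact (Finset.exists_mem_eq_inf' Finset.univ_nonempty fun a =>
    (1 - M.γ) * c (x, a) + M.γ * ∑ x', M.P x a x' * M.vfix c x').choose_spec.2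

/-- The greedy policy. -/
noncomputable def greedy (c : X × A → ℝ) (x : X) (a : A) : ℝ :=
  if a = M.astar c x then 1 else 0

lemma greedy_isPolicy (c : X × A → ℝ) : IsPolicy (M.greedy c) := by
  constructor
  · intro x a; unfold greedy; split <;> norm_num
  · intro x; simp [greedy]

lemma Tadj_vfix_le (c : X × A → ℝ) (p : X × A) : M.Tadj (M.vfix c) p ≤ c p := by
  have h := M.vfix_le c p.1 p.2
  have hγ := M.one_sub_γ_pos
  simp only [Tadj]
  rw [div_mul_eq_mul_div, div_le_iff₀ hγ, one_mul]
  calc M.vfix c p.1 - M.γ * ∑ x', M.P p.1 p.2 x' * M.vfix c x'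
      ≤ (1 - M.γ) * c (p.1, p.2) := by linarith
    _ = c p * (1 - M.γ) := by rw [mul_comm]
  -- note : 1 * (vfix - γ∑) = ...

lemma Tadj_vfix_astar (c : X × A → ℝ) (x : X) :
    M.Tadj (M.vfix c) (x, M.astar c x) = c (x, M.astar c x) := by
  have h := M.vfix_eq_astar c x
  have hγ := M.one_sub_γ_pos
  simp only [Tadj]
  field_simp
  linarith

lemma value_greedy (c : X × A → ℝ) (x : X) :
    M.value c (M.greedy c) x = M.vfix c x := by
  have hπg := M.greedy_isPolicy c
  have h := M.value_sub hπg c (M.vfix c) x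
  have hz : ∑ p : X × A, M.occFrom (fun y => if y = x then 1 else 0) (M.greedy c) p
      * (c p - M.Tadj (M.vfix c) p) = 0 := by
    refine Finset.sum_eq_zero fun p _ => ?_
    obtain ⟨x1, a1⟩ := p
    by_cases hcase : a1 = M.astar c x1
    · subst hcase
      rw [M.Tadj_vfix_astar c x1, sub_self, mul_zero]
    · rw [M.occFrom_fst (isSDist_delta x) hπg x1 a1]
      simp [greedy, hcase]
  rw [hz] at h
  linarith

lemma vfix_le_value (hπ : IsPolicy π) (c : X × A → ℝ) (x : X) :
    M.vfix c x ≤ M.value c π x := by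
  have h := M.value_sub hπ c (M.vfix c) x
  have hnn : 0 ≤ ∑ p : X × A, M.occFrom (fun y => if y = x then 1 else 0) π p
      * (c p - M.Tadj (M.vfix c) p) := by
    refine Finset.sum_nonneg fun p _ => mul_nonneg
      (M.occFrom_nonneg (isSDist_delta x) hπ p) ?_
    linarith [M.Tadj_vfix_le c p]
  linarith

lemma Vstar_eq_vfix (c : X × A → ℝ) : M.Vstar c = M.vfix c := by
  funext x
  have hmem : M.vfix c x ∈ {v | ∃ π, IsPolicy π ∧ v = M.value c π x} :=
    ⟨M.greedy c, M.greedy_isPolicy c, (M.value_greedy c x).symm⟩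
  refine le_antisymm (csInf_le ⟨M.vfix c x, ?_⟩ hmem) (le_csInf ⟨_, hmem⟩ ?_)
  · rintro v ⟨π', hπ', rfl⟩
    exact M.vfix_le_value hπ' c x
  · rintro v ⟨π', hπ', rfl⟩
    exact M.vfix_le_value hπ' c x

lemma Vstar_le_value (hπ : IsPolicy π) (c : X × A → ℝ) (x : X) :
    M.Vstar c x ≤ M.value c π x := by
  rw [M.Vstar_eq_vfix]
  exact M.vfix_le_value hπ c x

lemma Tadj_Vstar_le (c : X × A → ℝ) (p : X × A) : M.Tadj (M.Vstar c) p ≤ c p := by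
  rw [M.Vstar_eq_vfix]
  exact M.Tadj_vfix_le c p

lemma greedy_optimal (c : X × A → ℝ) : M.IsOptimal c (M.greedy c) := by
  refine ⟨M.greedy_isPolicy c, fun π' hπ' => ?_⟩
  rw [M.cost_eq_sum_value (M.greedy_isPolicy c) c, M.cost_eq_sum_value hπ' c]
  refine Finset.sum_le_sum fun x _ => mul_le_mul_of_nonneg_left ?_ (M.ν_nonneg x)
  rw [M.value_greedy c x]
  exact M.vfix_le_value hπ' c x

lemma sum_ν_Vstar_eq_cost_greedy (c : X × A → ℝ) :
    ∑ x, M.ν x * M.Vstar c x = M.cost c (M.greedy c) := by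
  rw [M.cost_eq_sum_value (M.greedy_isPolicy c) c]
  refine Finset.sum_congr rfl fun x _ => ?_
  rw [M.Vstar_eq_vfix, M.value_greedy c x]

end Aux5

end FinMDP
section Main

open FinMDP

variable (M : FinMDP X A) {nc : ℕ}

lemma dualObj_eq {πE : X → A → ℝ} (hπE : FinMDP.IsPolicy πE)
    (c : Fin nc → X × A → ℝ) (u : X → ℝ) (w : Fin nc → ℝ) :
    dualObj M c πE u w = (∑ x, M.ν x * u x) - M.cost (costW c w) πE := by
  simp only [dualObj, FinMDP.cost, FinMDP.occ]
  rw [← M.pairing M.isSDist_ν hπE u, ← Finset.sum_sub_distrib]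
  refine Finset.sum_congr rfl fun p _ => ?_
  simp only [costW]
  ring

lemma dualObj_nonpos {πE : X → A → ℝ} (hπE : FinMDP.IsPolicy πE)
    (c : Fin nc → X × A → ℝ) {u : X → ℝ} {w : Fin nc → ℝ}
    (hfeas : dualFeasible M c u w) : dualObj M c πE u w ≤ 0 := by
  refine Finset.sum_nonpos fun p _ => mul_nonpos_of_nonneg_of_nonpos
    (M.occFrom_nonneg M.isSDist_ν hπE p) ?_
  have := hfeas.2 p
  simp only [costW] at this ⊢
  linarith

lemma feasible_le_Vstar (c : Fin nc → X × A → ℝ) {u : X → ℝ} {w : Fin nc → ℝ}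
    (hfeas : dualFeasible M c u w) (x : X) : u x ≤ M.Vstar (costW c w) x := by
  set cw := costW c w
  have hπg := M.greedy_isPolicy cw
  have h := M.value_sub hπg cw u x
  have hnn : 0 ≤ ∑ p : X × A, M.occFrom (fun y => if y = x then 1 else 0) (M.greedy cw) p
      * (cw p - M.Tadj u p) := by
    refine Finset.sum_nonneg fun p _ => mul_nonneg
      (M.occFrom_nonneg (isSDist_delta x) hπg p) (hfeas.2 p)
  rw [M.Vstar_eq_vfix, ← M.value_greedy cw x]
  linarith

lemma vstar_dual_optimal (c : Fin nc → X × A → ℝ) {πE : X → A → ℝ}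
    {w : Fin nc → ℝ} (hw : simplexPt w) (hopt : M.IsOptimal (costW c w) πE) :
    dualOptimal M c πE (M.Vstar (costW c w)) w := by
  have hπE := hopt.1
  have hfeas : dualFeasible M c (M.Vstar (costW c w)) w :=
    ⟨hw, fun p => sub_nonneg.mpr (M.Tadj_Vstar_le _ p)⟩
  have hobj : dualObj M c πE (M.Vstar (costW c w)) w = 0 := by
    rw [dualObj_eq M hπE c, M.sum_ν_Vstar_eq_cost_greedy, sub_eq_zero]
    exact le_antisymm ((M.greedy_optimal (costW c w)).2 πE hπE)
      (hopt.2 (M.greedy (costW c w)) (M.greedy_isPolicy _))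
  refine ⟨hfeas, fun u' w' hfeas' => ?_⟩
  rw [hobj]
  exact dualObj_nonpos M hπE c hfeas'

end Main

/-- (Optimal expert.) Assume `ν₀` has full support and `π_E` is optimal
for the forward problem with cost `c_{w_true}`, `w_true ∈ Δ`. Then `(u_A, w_A)` is
optimal for the dual LP iff `w_A ∈ Δ`, `π_E` is optimal for cost `c_{w_A}` and
`u_A = V*_{w_A}`. In particular `(V*_{w_true}, w_true)` is dual optimal. -/
theorem dual_optimality_characterization (M : FinMDP X A) {nc : ℕ}
    (hν : ∀ x, 0 < M.ν x)
    (c : Fin nc → X × A → ℝ)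
    (wtrue : Fin nc → ℝ) (hwtrue : simplexPt wtrue)
    (πE : X → A → ℝ) (hE : M.IsOptimal (costW c wtrue) πE)
    (uA : X → ℝ) (wA : Fin nc → ℝ) :
    (dualOptimal M c πE uA wA ↔
      simplexPt wA ∧ M.IsOptimal (costW c wA) πE ∧ uA = M.Vstar (costW c wA)) ∧
    dualOptimal M c πE (M.Vstar (costW c wtrue)) wtrue := by
  have hπE := hE.1
  have hpart2 := vstar_dual_optimal M c hwtrue hE
  refine ⟨⟨fun hopt => ?_, ?_⟩, hpart2⟩
  · obtain ⟨⟨hwA, hfeasA⟩, hmax⟩ := hopt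
    have hobj0 : dualObj M c πE uA wA = 0 := by
      refine le_antisymm (dualObj_nonpos M hπE c ⟨hwA, hfeasA⟩) ?_
      have h := hmax (M.Vstar (costW c wtrue)) wtrue hpart2.1
      have hobj : dualObj M c πE (M.Vstar (costW c wtrue)) wtrue = 0 := by
        rw [dualObj_eq M hπE c, M.sum_ν_Vstar_eq_cost_greedy, sub_eq_zero]
        exact le_antisymm ((M.greedy_optimal (costW c wtrue)).2 πE hπE)
          (hE.2 (M.greedy (costW c wtrue)) (M.greedy_isPolicy _))
      linarith
    have hcostE : M.cost (costW c wA) πE = ∑ x, M.ν x * uA x := by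
      rw [dualObj_eq M hπE c] at hobj0
      linarith
    have hle : ∀ x, uA x ≤ M.Vstar (costW c wA) x :=
      feasible_le_Vstar M c ⟨hwA, hfeasA⟩
    have hsumle : ∑ x, M.ν x * uA x ≤ ∑ x, M.ν x * M.Vstar (costW c wA) x :=
      Finset.sum_le_sum fun x _ => mul_le_mul_of_nonneg_left (hle x) (M.ν_nonneg x)
    have hEopt : M.IsOptimal (costW c wA) πE := by
      refine ⟨hπE, fun π' hπ' => ?_⟩
      calc M.cost (costW c wA) πE = ∑ x, M.ν x * uA x := hcostE
        _ ≤ ∑ x, M.ν x * M.Vstar (costW c wA) x := hsumle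
        _ = M.cost (costW c wA) (M.greedy (costW c wA)) := M.sum_ν_Vstar_eq_cost_greedy _
        _ ≤ M.cost (costW c wA) π' := (M.greedy_optimal (costW c wA)).2 π' hπ'
    refine ⟨hwA, hEopt, ?_⟩
    -- uA = Vstar
    have hsumge : ∑ x, M.ν x * M.Vstar (costW c wA) x ≤ ∑ x, M.ν x * uA x := by
      calc ∑ x, M.ν x * M.Vstar (costW c wA) x
          = M.cost (costW c wA) (M.greedy (costW c wA)) := M.sum_ν_Vstar_eq_cost_greedy _
        _ ≤ M.cost (costW c wA) πE := (M.greedy_optimal (costW c wA)).2 πE hπE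
        _ = ∑ x, M.ν x * uA x := hcostE
    have hzero : ∑ x, M.ν x * (M.Vstar (costW c wA) x - uA x) = 0 := by
      rw [Finset.sum_congr rfl fun x _ => mul_sub (M.ν x) _ _, Finset.sum_sub_distrib]
      linarith
    have hterm := (Finset.sum_eq_zero_iff_of_nonneg fun x _ =>
      mul_nonneg (M.ν_nonneg x) (by linarith [hle x])).mp hzero
    funext x
    have := hterm x (Finset.mem_univ x)
    have hν' := (hν x).ne'
    have : M.Vstar (costW c wA) x - uA x = 0 := by
      rcases mul_eq_zero.mp this with h | h
      · exact absurd h hν'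
      · exact h
    linarith
  · rintro ⟨hwA, hEoptA, rfl⟩
    exact vstar_dual_optimal M c hwA hEoptA
end

section
/- Let μ ∈ Δ(X×A) and π_μ the induced policy with occupancy measure μ_{π_μ}. Then ‖μ - μ_{π_μ}‖₁ ≤ ‖ν₀ - T_γ μ‖₁, i.e., the ℓ¹ distribution mismatch between μ and the occupancy measure it induces is bounded by the violation degree of the Bellman flow constraints. -/
open Finset

variable {X A : Type*} [Fintype X] [Fintype A] [DecidableEq X] [DecidableEq A]
  [Nonempty X] [Nonempty A]

/-!
Let `m(x) = ∑ₐ μ(x,a)` be the state marginal of `μ`, so that `μ = m · π` with `π = π_μ`, and let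
`P_π` be the state transition matrix of `π`, acting on row vectors. The occupancy measure of `π`
is `d · π` with `d = (1-γ) ν₀ (I - γP_π)⁻¹`, while the definition of `T_γ` reads
`T_γ μ = (1-γ)⁻¹ m (I - γP_π)`. Hence `m - d = (1-γ) (T_γ μ - ν₀) (I - γP_π)⁻¹`, and
`(1-γ) (I - γP_π)⁻¹ = (1-γ) ∑ₜ γᵗ P_πᵗ` is a convex combination of stochastic matrices, none of
which increases the `ℓ¹` norm of a row vector. Since `μ` and `μ_π` both factor through `π`,
`‖μ - μ_π‖₁ = ‖m - d‖₁`.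
-/

open Matrix

section L1

variable {ι : Type*} [Fintype ι]

lemma abs_le_l1 (f : ι → ℝ) (i : ι) : |f i| ≤ l1 f :=
  Finset.single_le_sum (fun j _ => abs_nonneg (f j)) (Finset.mem_univ i)

lemma l1_sub_comm (f g : ι → ℝ) : l1 (f - g) = l1 (g - f) := by
  simp only [l1, Pi.sub_apply, abs_sub_comm]

end L1

lemma summable_geometric_mul_of_abs_le {γ C : ℝ} (h0 : 0 ≤ γ) (h1 : γ < 1) {u : ℕ → ℝ}
    (hu : ∀ t, |u t| ≤ C) : Summable fun t => γ ^ t * u t := by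
  refine Summable.of_norm_bounded ((summable_geometric_of_lt_one h0 h1).mul_right C) fun t => ?_
  rw [Real.norm_eq_abs, abs_mul, abs_pow, abs_of_nonneg h0]
  exact mul_le_mul_of_nonneg_left (hu t) (pow_nonneg h0 t)

namespace Matrix

variable {n : Type*} [Fintype n] [DecidableEq n]

lemma l1_vecMul_le {S : Matrix n n ℝ} (hS : S ∈ rowStochastic ℝ n) (f : n → ℝ) :
    l1 (f ᵥ* S) ≤ l1 f :=
  calc l1 (f ᵥ* S) ≤ ∑ j, ∑ i, |f i| * S i j :=
        Finset.sum_le_sum fun j _ => (Finset.abs_sum_le_sum_abs _ _).trans_eq <|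
          Finset.sum_congr rfl fun i _ => by
            rw [abs_mul, abs_of_nonneg (nonneg_of_mem_rowStochastic hS)]
    _ = ∑ i, |f i| * ∑ j, S i j := by
        rw [Finset.sum_comm]
        simp only [Finset.mul_sum]
    _ = l1 f := by simp only [sum_row_of_mem_rowStochastic hS, mul_one, l1]

/-- `(1-γ) f (I - γS)⁻¹` for a row vector `f`, written as its Neumann series. -/
noncomputable def discountedResolvent (γ : ℝ) (S : Matrix n n ℝ) (f : n → ℝ) : n → ℝ :=
  fun j => (1 - γ) * ∑' t : ℕ, γ ^ t * (f ᵥ* S ^ t) j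

variable {S : Matrix n n ℝ} {γ : ℝ}

lemma summable_vecMul_pow (hS : S ∈ rowStochastic ℝ n) (h0 : 0 ≤ γ) (h1 : γ < 1)
    (f : n → ℝ) (j : n) : Summable fun t : ℕ => γ ^ t * (f ᵥ* S ^ t) j :=
  summable_geometric_mul_of_abs_le h0 h1 fun t =>
    (abs_le_l1 _ j).trans (l1_vecMul_le (pow_mem hS t) f)

lemma discountedResolvent_smul (c : ℝ) (f : n → ℝ) :
    discountedResolvent γ S (c • f) = c • discountedResolvent γ S f := by
  funext j
  simp only [discountedResolvent, smul_vecMul, Pi.smul_apply, smul_eq_mul, mul_left_comm _ c,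
    tsum_mul_left]

lemma discountedResolvent_sub (hS : S ∈ rowStochastic ℝ n) (h0 : 0 ≤ γ) (h1 : γ < 1)
    (f g : n → ℝ) :
    discountedResolvent γ S (f - g) = discountedResolvent γ S f - discountedResolvent γ S g := by
  funext j
  simp only [discountedResolvent, sub_vecMul, Pi.sub_apply, mul_sub]
  rw [(summable_vecMul_pow hS h0 h1 f j).tsum_sub (summable_vecMul_pow hS h0 h1 g j), mul_sub]

lemma discountedResolvent_sub_smul_vecMul (hS : S ∈ rowStochastic ℝ n) (h0 : 0 ≤ γ)
    (h1 : γ < 1) (g : n → ℝ) :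
    discountedResolvent γ S (g - γ • (g ᵥ* S)) = (1 - γ) • g := by
  funext j
  set a : ℕ → ℝ := fun t => γ ^ t * (g ᵥ* S ^ t) j
  have ha : Summable a := summable_vecMul_pow hS h0 h1 g j
  have htelescope : ∀ t, γ ^ t * ((g - γ • (g ᵥ* S)) ᵥ* S ^ t) j = a t - a (t + 1) := by
    intro t
    simp only [a, sub_vecMul, smul_vecMul, vecMul_vecMul, ← pow_succ', Pi.sub_apply,
      Pi.smul_apply, smul_eq_mul, pow_succ]
    ring
  simp only [discountedResolvent, htelescope]
  rw [ha.tsum_sub ((summable_nat_add_iff 1).2 ha), ha.tsum_eq_zero_add]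
  simp [a]

lemma discountedResolvent_flow (hS : S ∈ rowStochastic ℝ n) (h0 : 0 ≤ γ) (h1 : γ < 1)
    (g : n → ℝ) : discountedResolvent γ S ((1 - γ)⁻¹ • (g - γ • (g ᵥ* S))) = g := by
  rw [discountedResolvent_smul, discountedResolvent_sub_smul_vecMul hS h0 h1, smul_smul,
    inv_mul_cancel₀ (sub_pos.2 h1).ne', one_smul]

lemma l1_discountedResolvent_le (hS : S ∈ rowStochastic ℝ n) (h0 : 0 ≤ γ) (h1 : γ < 1)
    (f : n → ℝ) : l1 (discountedResolvent γ S f) ≤ l1 f := by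
  have h1γ : 0 < 1 - γ := sub_pos.2 h1
  have hnorm : ∀ t j, ‖γ ^ t * (f ᵥ* S ^ t) j‖ = γ ^ t * |(f ᵥ* S ^ t) j| := fun t j => by
    rw [Real.norm_eq_abs, abs_mul, abs_of_nonneg (pow_nonneg h0 t)]
  have habs : ∀ j, Summable fun t => γ ^ t * |(f ᵥ* S ^ t) j| := fun j =>
    summable_geometric_mul_of_abs_le h0 h1 fun t => by
      rw [abs_abs]; exact (abs_le_l1 _ j).trans (l1_vecMul_le (pow_mem hS t) f)
  calc l1 (discountedResolvent γ S f)
      ≤ ∑ j, (1 - γ) * ∑' t, γ ^ t * |(f ᵥ* S ^ t) j| := Finset.sum_le_sum fun j _ => by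
        rw [discountedResolvent, abs_mul, abs_of_pos h1γ]
        gcongr
        rw [← Real.norm_eq_abs, ← tsum_congr fun t => hnorm t j]
        exact norm_tsum_le_tsum_norm ((habs j).congr fun t => (hnorm t j).symm)
    _ = (1 - γ) * ∑' t, γ ^ t * l1 (f ᵥ* S ^ t) := by
        rw [← Finset.mul_sum, ← (Summable.tsum_finsetSum fun j _ => habs j)]
        simp only [l1, Finset.mul_sum]
    _ ≤ (1 - γ) * ∑' t, γ ^ t * l1 f := by
        gcongr with t
        · exact summable_geometric_mul_of_abs_le h0 h1 fun t =>
            (abs_of_nonneg (Finset.sum_nonneg fun j _ => abs_nonneg _)).trans_le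
              (l1_vecMul_le (pow_mem hS t) f)
        · exact (summable_geometric_of_lt_one h0 h1).mul_right _
        · exact l1_vecMul_le (pow_mem hS t) f
    _ = l1 f := by
        rw [tsum_mul_right, tsum_geometric_of_lt_one h0 h1]
        field_simp

end Matrix

namespace FinMDP

section

omit [DecidableEq X] [DecidableEq A] [Nonempty X] [Nonempty A]

variable (M : FinMDP X A)

def transitionMatrix (π : X → A → ℝ) : Matrix X X ℝ := fun x x' => ∑ a, π x a * M.P x a x'

lemma vecMul_transitionMatrix_apply (π : X → A → ℝ) (g : X → ℝ) (x' : X) :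
    (g ᵥ* M.transitionMatrix π) x' = ∑ q : X × A, g q.1 * π q.1 q.2 * M.P q.1 q.2 x' := by
  simp only [vecMul, dotProduct, transitionMatrix, Finset.mul_sum, Fintype.sum_prod_type,
    mul_assoc]

lemma Tflow_mul_policy {π : X → A → ℝ} (hπ : IsPolicy π) (m : X → ℝ) :
    M.Tflow (fun p => m p.1 * π p.1 p.2)
      = (1 - M.γ)⁻¹ • (m - M.γ • (m ᵥ* M.transitionMatrix π)) := by
  funext x
  simp only [Tflow, vecMul_transitionMatrix_apply, ← Finset.mul_sum, hπ.2, mul_one, one_div,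
    Pi.smul_apply, Pi.sub_apply, smul_eq_mul]

lemma IsPolicy.l1_mul {π : X → A → ℝ} (hπ : IsPolicy π) (f : X → ℝ) :
    l1 (fun p : X × A => f p.1 * π p.1 p.2) = l1 f := by
  simp only [l1, abs_mul, abs_of_nonneg (hπ.1 _ _), Fintype.sum_prod_type, ← Finset.mul_sum,
    hπ.2, mul_one]

end

section

omit [DecidableEq A] [Nonempty X] [Nonempty A]

variable (M : FinMDP X A)

lemma transitionMatrix_mem_rowStochastic {π : X → A → ℝ} (hπ : IsPolicy π) :
    M.transitionMatrix π ∈ rowStochastic ℝ X := by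
  refine mem_rowStochastic_iff_sum.2
    ⟨fun x x' => Finset.sum_nonneg fun a _ => mul_nonneg (hπ.1 x a) (M.P_nonneg x a x'),
      fun x => ?_⟩
  simp only [transitionMatrix]
  rw [Finset.sum_comm]
  simp only [← Finset.mul_sum, M.P_sum, mul_one, hπ.2]

lemma saDist_eq (ν' : X → ℝ) (π : X → A → ℝ) (t : ℕ) (p : X × A) :
    M.saDist ν' π t p = (ν' ᵥ* M.transitionMatrix π ^ t) p.1 * π p.1 p.2 := by
  induction t generalizing p with
  | zero => simp [saDist]
  | succ t ih =>
    simp only [saDist, ih, pow_succ, ← vecMul_vecMul, vecMul_transitionMatrix_apply]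

lemma occFrom_eq (ν' : X → ℝ) (π : X → A → ℝ) (p : X × A) :
    M.occFrom ν' π p = discountedResolvent M.γ (M.transitionMatrix π) ν' p.1 * π p.1 p.2 := by
  simp only [occFrom, discountedResolvent, saDist_eq, ← mul_assoc, tsum_mul_right]

end

end FinMDP

section

omit [Fintype X] [DecidableEq X] [DecidableEq A] [Nonempty X]

omit [Nonempty A] in
lemma sum_mul_inducedPolicy {μ : X × A → ℝ} (hμ : ∀ p, 0 ≤ μ p) (p : X × A) :
    (∑ a, μ (p.1, a)) * inducedPolicy μ p.1 p.2 = μ p := by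
  by_cases h : ∑ a, μ (p.1, a) = 0
  · rw [h, zero_mul, eq_comm]
    exact (Finset.sum_eq_zero_iff_of_nonneg fun a _ => hμ (p.1, a)).1 h p.2 (Finset.mem_univ _)
  · rw [inducedPolicy, if_neg h, mul_div_cancel₀ _ h]

lemma isPolicy_inducedPolicy {μ : X × A → ℝ} (hμ : ∀ p, 0 ≤ μ p) :
    FinMDP.IsPolicy (inducedPolicy μ) := by
  refine ⟨fun x a => ?_, fun x => ?_⟩ <;> unfold inducedPolicy <;> split_ifs with h
  · positivity
  · exact div_nonneg (hμ _) (Finset.sum_nonneg fun a _ => hμ _)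
  · simp [Finset.card_univ]
  · rw [← Finset.sum_div, div_self h]

end

/-- For any distribution `μ ∈ Δ(X×A)` with induced policy `π_μ`, the
`ℓ¹` distribution mismatch between `μ` and the occupancy measure of `π_μ` is bounded
by the violation degree of the Bellman flow constraints. -/
theorem distribution_mismatch_bound (M : FinMDP X A)
    (μ : X × A → ℝ) (hμ : IsDist μ) :
    l1 (fun p => μ p - M.occ (inducedPolicy μ) p)
      ≤ l1 (fun x => M.ν x - M.Tflow μ x) := by
  set π := inducedPolicy μ
  set m : X → ℝ := fun x => ∑ a, μ (x, a)
  set P := M.transitionMatrix π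
  have hπ : FinMDP.IsPolicy π := isPolicy_inducedPolicy hμ.1
  have hP : P ∈ rowStochastic ℝ X := M.transitionMatrix_mem_rowStochastic hπ
  have hγ0 : 0 ≤ M.γ := M.γ_pos.le
  have hμm : μ = fun p => m p.1 * π p.1 p.2 :=
    funext fun p => (sum_mul_inducedPolicy hμ.1 p).symm
  have hresolvent : discountedResolvent M.γ P (M.Tflow μ) = m := by
    rw [hμm, M.Tflow_mul_policy hπ, discountedResolvent_flow hP hγ0 M.γ_lt_one]
  calc l1 (fun p => μ p - M.occ π p)
      = l1 (fun p : X × A => (m - discountedResolvent M.γ P M.ν) p.1 * π p.1 p.2) := by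
        simp only [FinMDP.occ, M.occFrom_eq, Pi.sub_apply, sub_mul]
        rw [hμm]
    _ = l1 (discountedResolvent M.γ P (M.Tflow μ) - discountedResolvent M.γ P M.ν) := by
        rw [hπ.l1_mul, hresolvent]
    _ = l1 (discountedResolvent M.γ P (M.Tflow μ - M.ν)) := by
        rw [discountedResolvent_sub hP hγ0 M.γ_lt_one]
    _ ≤ l1 (M.Tflow μ - M.ν) := l1_discountedResolvent_le hP hγ0 M.γ_lt_one _
    _ = l1 (fun x => M.ν x - M.Tflow μ x) := l1_sub_comm _ _
end

section
/- Under the coherence assumption, for any feasible (θ, λ, w), the Bellman flow violation satisfies ‖T_γ μ_θ - ν₀‖₁ ≤ ε_sad(θ,λ,w) + (2/(1-γ))‖V*_{w_A} - Ψλ*‖_∞, where λ* is a dual optimizer of the relaxed saddle-point problem and (V*_{w_A}, w_A) is dual optimal for the full dual LP. -/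
open Finset

variable {X A : Type*} [Fintype X] [Fintype A] [DecidableEq X] [DecidableEq A]
  [Nonempty X] [Nonempty A]

section Aux

variable {X A : Type*} [Fintype X] [Fintype A] [DecidableEq X] [DecidableEq A]
  [Nonempty X] [Nonempty A]

namespace ProofAux

lemma saDist_nonneg (M : FinMDP X A) (ν' : X → ℝ) (hν : ∀ x, 0 ≤ ν' x)
    (π : X → A → ℝ) (hπ : FinMDP.IsPolicy π) :
    ∀ t p, 0 ≤ M.saDist ν' π t p := by
  intro t
  induction t with
  | zero => exact fun p => mul_nonneg (hν _) (hπ.1 _ _)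
  | succ t ih =>
    intro p
    exact mul_nonneg
      (Finset.sum_nonneg fun q _ => mul_nonneg (ih q) (M.P_nonneg _ _ _)) (hπ.1 _ _)

lemma saDist_sum (M : FinMDP X A) (ν' : X → ℝ) (hν : ∑ x, ν' x = 1)
    (π : X → A → ℝ) (hπ : FinMDP.IsPolicy π) :
    ∀ t, ∑ p : X × A, M.saDist ν' π t p = 1 := by
  intro t
  induction t with
  | zero =>
    simp only [FinMDP.saDist, Fintype.sum_prod_type, ← Finset.mul_sum]
    simp [hπ.2, hν]
  | succ t ih =>
    have hrow : ∀ x : X, ∑ a, M.saDist ν' π (t + 1) (x, a)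
        = ∑ q : X × A, M.saDist ν' π t q * M.P q.1 q.2 x := by
      intro x
      show ∑ a, (∑ q : X × A, M.saDist ν' π t q * M.P q.1 q.2 x) * π x a = _
      rw [← Finset.mul_sum, hπ.2, mul_one]
    rw [Fintype.sum_prod_type]
    simp only [hrow]
    rw [Finset.sum_comm]
    simp only [← Finset.mul_sum, M.P_sum, mul_one]
    exact ih

lemma saDist_le_one (M : FinMDP X A) (ν' : X → ℝ) (hν : ∀ x, 0 ≤ ν' x)
    (hν1 : ∑ x, ν' x = 1) (π : X → A → ℝ) (hπ : FinMDP.IsPolicy π)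
    (t : ℕ) (p : X × A) : M.saDist ν' π t p ≤ 1 := by
  calc M.saDist ν' π t p ≤ ∑ q : X × A, M.saDist ν' π t q :=
        Finset.single_le_sum (fun q _ => saDist_nonneg M ν' hν π hπ t q) (Finset.mem_univ p)
    _ = 1 := saDist_sum M ν' hν1 π hπ t

lemma saDist_summable (M : FinMDP X A) (ν' : X → ℝ) (hν : ∀ x, 0 ≤ ν' x)
    (hν1 : ∑ x, ν' x = 1) (π : X → A → ℝ) (hπ : FinMDP.IsPolicy π) (p : X × A) :
    Summable (fun t => M.γ ^ t * M.saDist ν' π t p) := by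
  apply Summable.of_nonneg_of_le
    (fun t => mul_nonneg (pow_nonneg M.γ_pos.le t) (saDist_nonneg M ν' hν π hπ t p))
    (fun t => ?_) (summable_geometric_of_lt_one M.γ_pos.le M.γ_lt_one)
  calc M.γ ^ t * M.saDist ν' π t p ≤ M.γ ^ t * 1 :=
        mul_le_mul_of_nonneg_left (saDist_le_one M ν' hν hν1 π hπ t p) (pow_nonneg M.γ_pos.le t)
    _ = M.γ ^ t := mul_one _

/-- The Bellman flow identity: `T_γ (occ π) = ν`. -/
lemma Tflow_occ (M : FinMDP X A) (π : X → A → ℝ) (hπ : FinMDP.IsPolicy π) (x : X) :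
    M.Tflow (M.occ π) x = M.ν x := by
  have hν := M.ν_nonneg
  have hν1 := M.ν_sum
  have hsumm : ∀ p : X × A, Summable (fun t => M.γ ^ t * M.saDist M.ν π t p) :=
    fun p => saDist_summable M M.ν hν hν1 π hπ p
  set m : ℕ → X → ℝ := fun t y => ∑ a, M.saDist M.ν π t (y, a) with hm
  have hm0 : m 0 x = M.ν x := by
    simp only [hm, FinMDP.saDist, ← Finset.mul_sum, hπ.2, mul_one]
  have hmsucc : ∀ t y, m (t + 1) y = ∑ q : X × A, M.saDist M.ν π t q * M.P q.1 q.2 y := by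
    intro t y
    simp only [hm, FinMDP.saDist, ← Finset.mul_sum, hπ.2, mul_one]
  have hmsumm : ∀ y, Summable (fun t => M.γ ^ t * m t y) := by
    intro y
    have : (fun t => M.γ ^ t * m t y) = fun t => ∑ a, M.γ ^ t * M.saDist M.ν π t (y, a) := by
      funext t; rw [Finset.mul_sum]
    rw [this]
    exact summable_sum fun a _ => hsumm (y, a)
  -- the two sums appearing in Tflow
  have h1 : (∑ a, M.occ π (x, a)) = (1 - M.γ) * ∑' t, M.γ ^ t * m t x := by
    simp only [FinMDP.occ, FinMDP.occFrom, ← Finset.mul_sum]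
    congr 1
    rw [← Summable.tsum_finsetSum (fun a _ => hsumm (x, a))]
    congr 1; funext t; rw [Finset.mul_sum]
  have h2 : (∑ p : X × A, M.occ π p * M.P p.1 p.2 x)
      = (1 - M.γ) * ∑' t, M.γ ^ t * m (t + 1) x := by
    simp only [FinMDP.occ, FinMDP.occFrom]
    have : ∀ p : X × A, ((1 - M.γ) * ∑' t, M.γ ^ t * M.saDist M.ν π t p) * M.P p.1 p.2 x
        = (1 - M.γ) * ∑' t, M.γ ^ t * M.saDist M.ν π t p * M.P p.1 p.2 x := by
      intro p
      rw [mul_assoc]; congr 1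
      rw [← tsum_mul_right]
    simp only [this, ← Finset.mul_sum]
    congr 1
    rw [← Summable.tsum_finsetSum (fun p _ => by
      simpa only [mul_assoc] using (hsumm p).mul_right (M.P p.1 p.2 x))]
    congr 1; funext t
    rw [hmsucc, Finset.mul_sum]
    simp [mul_assoc]
  have hγ1 : (1 : ℝ) - M.γ ≠ 0 := by
    have := M.γ_lt_one; linarith
  have htel : (∑' t, M.γ ^ t * m t x) - M.γ * ∑' t, M.γ ^ t * m (t + 1) x = M.ν x := by
    rw [Summable.tsum_eq_zero_add (hmsumm x)]
    have : M.γ * ∑' t, M.γ ^ t * m (t + 1) x = ∑' t, M.γ ^ (t + 1) * m (t + 1) x := by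
      rw [← tsum_mul_left]
      congr 1; funext t; ring
    rw [this]
    simp [hm0]
  simp only [FinMDP.Tflow, h1, h2]
  have hre : (1 - M.γ) * (∑' t, M.γ ^ t * m t x)
      - M.γ * ((1 - M.γ) * ∑' t, M.γ ^ t * m (t + 1) x)
      = (1 - M.γ) * ((∑' t, M.γ ^ t * m t x) - M.γ * ∑' t, M.γ ^ t * m (t + 1) x) := by ring
  rw [hre, htel]
  field_simp

/-- Adjointness: `⟨μ, T*_γ f⟩ = ⟨T_γ μ, f⟩`. -/
lemma pairing (M : FinMDP X A) (μ : X × A → ℝ) (f : X → ℝ) :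
    ∑ p : X × A, μ p * M.Tadj f p = ∑ x, M.Tflow μ x * f x := by
  simp only [FinMDP.Tadj, FinMDP.Tflow]
  have key : ∑ x, (∑ p : X × A, μ p * M.P p.1 p.2 x) * f x
      = ∑ p : X × A, μ p * ∑ x', M.P p.1 p.2 x' * f x' := by
    simp only [Finset.sum_mul, Finset.mul_sum]
    rw [Finset.sum_comm]
    exact Finset.sum_congr rfl fun p _ => Finset.sum_congr rfl fun x _ => by ring
  have key2 : ∑ x, (∑ a, μ (x, a)) * f x = ∑ p : X × A, μ p * f p.1 := by
    rw [Fintype.sum_prod_type]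
    exact Finset.sum_congr rfl fun x _ => by rw [Finset.sum_mul]
  have e1 : ∀ p : X × A, μ p * ((1 / (1 - M.γ)) * (f p.1 - M.γ * ∑ x', M.P p.1 p.2 x' * f x'))
      = (1 / (1 - M.γ)) * (μ p * f p.1)
        - (1 / (1 - M.γ)) * M.γ * (μ p * ∑ x', M.P p.1 p.2 x' * f x') := fun p => by ring
  have e2 : ∀ x, (1 / (1 - M.γ)) * ((∑ a, μ (x, a)) - M.γ * ∑ p : X × A, μ p * M.P p.1 p.2 x) * f x
      = (1 / (1 - M.γ)) * ((∑ a, μ (x, a)) * f x)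
        - (1 / (1 - M.γ)) * M.γ * ((∑ p : X × A, μ p * M.P p.1 p.2 x) * f x) := fun x => by ring
  simp only [e1, e2, Finset.sum_sub_distrib, ← Finset.mul_sum]
  rw [key2, key]

lemma sum_abs_Tflow_le (M : FinMDP X A) (μ : X × A → ℝ) (hμ : IsDist μ) :
    ∑ x, |M.Tflow μ x| ≤ (1 + M.γ) / (1 - M.γ) := by
  have hγ0 : (0:ℝ) < 1 - M.γ := by linarith [M.γ_lt_one]
  have hsum1 : ∑ x, ∑ a, μ (x, a) = 1 := by
    rw [← Fintype.sum_prod_type]; exact hμ.2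
  have hsum2 : ∑ x, ∑ p : X × A, μ p * M.P p.1 p.2 x = 1 := by
    rw [Finset.sum_comm]
    simp only [← Finset.mul_sum, M.P_sum, mul_one]
    exact hμ.2
  have hbd : ∀ x, |M.Tflow μ x| ≤ (1 / (1 - M.γ)) *
      ((∑ a, μ (x, a)) + M.γ * ∑ p : X × A, μ p * M.P p.1 p.2 x) := by
    intro x
    simp only [FinMDP.Tflow]
    rw [abs_mul, abs_of_nonneg (by positivity : (0:ℝ) ≤ 1 / (1 - M.γ))]
    apply mul_le_mul_of_nonneg_left _ (by positivity)
    refine (abs_sub _ _).trans ?_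
    gcongr
    · exact le_of_eq (abs_of_nonneg (Finset.sum_nonneg fun a _ => hμ.1 (x, a)))
    · rw [abs_mul, abs_of_nonneg M.γ_pos.le]
      apply mul_le_mul_of_nonneg_left _ M.γ_pos.le
      exact le_of_eq (abs_of_nonneg (Finset.sum_nonneg fun p _ =>
        mul_nonneg (hμ.1 p) (M.P_nonneg _ _ _)))
  calc ∑ x, |M.Tflow μ x|
      ≤ ∑ x, (1 / (1 - M.γ)) *
        ((∑ a, μ (x, a)) + M.γ * ∑ p : X × A, μ p * M.P p.1 p.2 x) :=
        Finset.sum_le_sum fun x _ => hbd x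
    _ = (1 / (1 - M.γ)) * (1 + M.γ * 1) := by
        rw [← Finset.mul_sum, Finset.sum_add_distrib, hsum1, ← Finset.mul_sum, hsum2]
    _ = (1 + M.γ) / (1 - M.γ) := by field_simp

lemma lamSet_abs_sum {nu : ℕ} {β : ℝ} (hβ : 0 ≤ β) {l : Fin nu → ℝ}
    (hl : l ∈ lamSet nu β) : ∑ k, |l k| ≤ β := by
  rcases Nat.eq_zero_or_pos nu with h | h
  · subst h; simpa using hβ
  · have hnu : (0:ℝ) < Real.sqrt nu := Real.sqrt_pos.mpr (by exact_mod_cast h)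
    have hcs : (∑ k, |l k| * 1) ^ 2 ≤ (∑ k, |l k| ^ 2) * ∑ _k : Fin nu, (1:ℝ) ^ 2 :=
      Finset.sum_mul_sq_le_sq_mul_sq _ _ _
    simp only [mul_one, one_pow, Finset.sum_const, Finset.card_univ, Fintype.card_fin,
      nsmul_eq_mul, sq_abs] at hcs
    have h1 : (0:ℝ) ≤ ∑ k, |l k| := Finset.sum_nonneg fun k _ => abs_nonneg _
    have h2 : ∑ k, |l k| ≤ Real.sqrt ((∑ k, l k ^ 2) * nu) := by
      rw [← Real.sqrt_sq h1]
      apply Real.sqrt_le_sqrt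
      calc (∑ k, |l k|) ^ 2 ≤ (∑ k, l k ^ 2) * (nu : ℝ) := by
            rw [mul_comm] at hcs; linarith [hcs]
        _ = (∑ k, l k ^ 2) * nu := rfl
    calc ∑ k, |l k| ≤ Real.sqrt (∑ k, l k ^ 2) * Real.sqrt nu := by
          rw [← Real.sqrt_mul (Finset.sum_nonneg fun k _ => sq_nonneg _)]
          exact h2
      _ ≤ (β / Real.sqrt nu) * Real.sqrt nu :=
          mul_le_mul_of_nonneg_right hl hnu.le
      _ = β := div_mul_cancel₀ _ hnu.ne'

lemma Tadj_abs_le (M : FinMDP X A) (u : X → ℝ) (b : ℝ) (hb : 0 ≤ b)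
    (hu : ∀ x, |u x| ≤ b) (p : X × A) : |M.Tadj u p| ≤ 2 * b / (1 - M.γ) := by
  have hγ : (0:ℝ) < 1 - M.γ := by linarith [M.γ_lt_one]
  simp only [FinMDP.Tadj]
  rw [abs_mul, abs_of_nonneg (by positivity : (0:ℝ) ≤ 1 / (1 - M.γ))]
  have hsum : |∑ x', M.P p.1 p.2 x' * u x'| ≤ b := by
    refine (Finset.abs_sum_le_sum_abs _ _).trans ?_
    calc ∑ x', |M.P p.1 p.2 x' * u x'| ≤ ∑ x', M.P p.1 p.2 x' * b := by
          refine Finset.sum_le_sum fun x _ => ?_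
          rw [abs_mul, abs_of_nonneg (M.P_nonneg _ _ _)]
          exact mul_le_mul_of_nonneg_left (hu x) (M.P_nonneg _ _ _)
      _ = b := by rw [← Finset.sum_mul, M.P_sum, one_mul]
  have habs : |u p.1 - M.γ * ∑ x', M.P p.1 p.2 x' * u x'| ≤ b + M.γ * b := by
    refine (abs_sub _ _).trans ?_
    refine add_le_add (hu _) ?_
    rw [abs_mul, abs_of_nonneg M.γ_pos.le]
    exact mul_le_mul_of_nonneg_left hsum M.γ_pos.le
  refine le_trans (mul_le_mul_of_nonneg_left habs (by positivity)) ?_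
  have h2b : b + M.γ * b ≤ 2 * b := by nlinarith [M.γ_lt_one, M.γ_pos]
  calc (1 / (1 - M.γ)) * (b + M.γ * b) ≤ (1 / (1 - M.γ)) * (2 * b) :=
        mul_le_mul_of_nonneg_left h2b (by positivity)
    _ = 2 * b / (1 - M.γ) := by ring

lemma Lr_abs_le {nm nu nc : ℕ} (M : FinMDP X A)
    (Φ : Fin nm → X × A → ℝ) (hΦ : ∀ i, IsDist (Φ i))
    (Ψ : Fin nu → X → ℝ) (hΨ : ∀ k x, |Ψ k x| ≤ 1)
    (c : Fin nc → X × A → ℝ) (hc : ∀ j p, |c j p| ≤ 1)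
    (β : ℝ) (hβ : 0 ≤ β) (πE : X → A → ℝ)
    {θ' : Fin nm → ℝ} (hθ' : simplexPt θ')
    {lam' : Fin nu → ℝ} (hlam' : lam' ∈ lamSet nu β)
    {w' : Fin nc → ℝ} (hw' : simplexPt w') :
    |Lr M Φ Ψ c πE θ' lam' w'|
      ≤ (1 + ∑ p : X × A, |M.occ πE p|) * (1 + 2 * β / (1 - M.γ)) := by
  have hγ : (0:ℝ) < 1 - M.γ := by linarith [M.γ_lt_one]
  have hΨb : ∀ x, |∑ k, lam' k * Ψ k x| ≤ β := by
    intro x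
    refine (Finset.abs_sum_le_sum_abs _ _).trans ?_
    calc ∑ k, |lam' k * Ψ k x| ≤ ∑ k, |lam' k| := by
          refine Finset.sum_le_sum fun k _ => ?_
          rw [abs_mul]
          exact mul_le_of_le_one_right (abs_nonneg _) (hΨ k x)
      _ ≤ β := lamSet_abs_sum hβ hlam'
  have hT : ∀ p, |M.Tadj (fun x => ∑ k, lam' k * Ψ k x) p| ≤ 2 * β / (1 - M.γ) :=
    Tadj_abs_le M _ β hβ hΨb
  have hcb : ∀ p, |∑ j, w' j * c j p| ≤ 1 := by
    intro p
    refine (Finset.abs_sum_le_sum_abs _ _).trans ?_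
    calc ∑ j, |w' j * c j p| ≤ ∑ j, w' j := by
          refine Finset.sum_le_sum fun j _ => ?_
          rw [abs_mul, abs_of_nonneg (hw'.1 j)]
          exact mul_le_of_le_one_right (hw'.1 j) (hc j p)
      _ = 1 := hw'.2
  have hfac : ∀ p : X × A, |(∑ j, w' j * c j p)
      - M.Tadj (fun x => ∑ k, lam' k * Ψ k x) p| ≤ 1 + 2 * β / (1 - M.γ) :=
    fun p => (abs_sub _ _).trans (add_le_add (hcb p) (hT p))
  have hmsum : ∑ p : X × A, |(∑ i, θ' i * Φ i p) - M.occ πE p|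
      ≤ 1 + ∑ p : X × A, |M.occ πE p| := by
    have h1 : ∑ p : X × A, |∑ i, θ' i * Φ i p| = 1 := by
      have : ∀ p : X × A, |∑ i, θ' i * Φ i p| = ∑ i, θ' i * Φ i p := fun p =>
        abs_of_nonneg (Finset.sum_nonneg fun i _ => mul_nonneg (hθ'.1 i) ((hΦ i).1 p))
      simp only [this]
      rw [Finset.sum_comm]
      have h2 : ∀ i, ∑ p : X × A, θ' i * Φ i p = θ' i := by
        intro i; rw [← Finset.mul_sum, (hΦ i).2, mul_one]
      simp only [h2]
      exact hθ'.2
    calc ∑ p : X × A, |(∑ i, θ' i * Φ i p) - M.occ πE p|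
        ≤ ∑ p : X × A, (|∑ i, θ' i * Φ i p| + |M.occ πE p|) :=
          Finset.sum_le_sum fun p _ => abs_sub _ _
      _ = 1 + ∑ p : X × A, |M.occ πE p| := by
          rw [Finset.sum_add_distrib, h1]
  calc |Lr M Φ Ψ c πE θ' lam' w'|
      ≤ ∑ p : X × A, |((∑ i, θ' i * Φ i p) - M.occ πE p) *
          ((∑ j, w' j * c j p) - M.Tadj (fun x => ∑ k, lam' k * Ψ k x) p)| :=
        Finset.abs_sum_le_sum_abs _ _
    _ ≤ ∑ p : X × A, |(∑ i, θ' i * Φ i p) - M.occ πE p| * (1 + 2 * β / (1 - M.γ)) := by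
        refine Finset.sum_le_sum fun p _ => ?_
        rw [abs_mul]
        exact mul_le_mul_of_nonneg_left (hfac p) (abs_nonneg _)
    _ = (∑ p : X × A, |(∑ i, θ' i * Φ i p) - M.occ πE p|) * (1 + 2 * β / (1 - M.γ)) := by
        rw [Finset.sum_mul]
    _ ≤ (1 + ∑ p : X × A, |M.occ πE p|) * (1 + 2 * β / (1 - M.γ)) := by
        refine mul_le_mul_of_nonneg_right hmsum ?_
        positivity

lemma l1_flow_le (M : FinMDP X A) (μ : X × A → ℝ) (hμ : IsDist μ) :
    ∑ x, |M.Tflow μ x - M.ν x| ≤ 2 / (1 - M.γ) := by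
  have hγ : (0:ℝ) < 1 - M.γ := by linarith [M.γ_lt_one]
  have h2 : ∑ x, |M.ν x| = 1 := by
    rw [← M.ν_sum]
    exact Finset.sum_congr rfl fun x _ => abs_of_nonneg (M.ν_nonneg x)
  calc ∑ x, |M.Tflow μ x - M.ν x| ≤ ∑ x, (|M.Tflow μ x| + |M.ν x|) :=
        Finset.sum_le_sum fun x _ => abs_sub _ _
    _ = (∑ x, |M.Tflow μ x|) + ∑ x, |M.ν x| := Finset.sum_add_distrib
    _ ≤ (1 + M.γ) / (1 - M.γ) + 1 := add_le_add (sum_abs_Tflow_le M μ hμ) h2.le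
    _ = 2 / (1 - M.γ) := by field_simp; ring

lemma abs_le_linf {ι : Type*} [Fintype ι] [Nonempty ι] (f : ι → ℝ) (i : ι) :
    |f i| ≤ linf f := by
  unfold linf
  exact Finset.le_sup' (fun j => |f j|) (Finset.mem_univ i)
end ProofAux

end Aux

/-- Under the coherence assumption, the Bellman flow violation of a
feasible `(θ, λ, w)` is bounded by the saddle-point residual plus
`(2/(1-γ)) ‖V*_{w_A} - Ψλ*‖_∞` for a dual optimizer `λ*` of the relaxed problem and
a dual-optimal `(V*_{w_A}, w_A)` of the full dual LP. -/
theorem flow_violation_bound (M : FinMDP X A) {nm nu nc : ℕ}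
    (Φ : Fin nm → X × A → ℝ) (hΦ : ∀ i, IsDist (Φ i))
    (Ψ : Fin nu → X → ℝ) (hΨ : ∀ k x, |Ψ k x| ≤ 1)
    (c : Fin nc → X × A → ℝ) (hc : ∀ j p, |c j p| ≤ 1)
    (β : ℝ) (hβ : 2 ≤ β)
    (πE : X → A → ℝ) (hπE : FinMDP.IsPolicy πE)
    (hcoh : ∀ θ', simplexPt θ' → ∀ u : X → ℝ, (∀ x, |u x| ≤ 2) →
      ∃ lam' ∈ lamSet nu β,
        ∑ x, (M.ν x - M.Tflow (fun p : X × A => ∑ i, θ' i * Φ i p) x)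
          * (u x - ∑ k, lam' k * Ψ k x) = 0)
    (uA : X → ℝ) (wA : Fin nc → ℝ)
    (hdual : dualOptimal M c πE uA wA)
    (hVA : uA = M.Vstar (costW c wA))
    (hVbound : ∀ x, |uA x| ≤ 1)
    (lamStar : Fin nu → ℝ) (wStar : Fin nc → ℝ)
    (hlamStar : lamStar ∈ lamSet nu β) (hwStar : simplexPt wStar)
    (hstar : ∀ lam' ∈ lamSet nu β, ∀ w', simplexPt w' →
      sInf {v : ℝ | ∃ θ', simplexPt θ' ∧ v = Lr M Φ Ψ c πE θ' lam' w'}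
        ≤ sInf {v : ℝ | ∃ θ', simplexPt θ' ∧ v = Lr M Φ Ψ c πE θ' lamStar wStar})
    (θ : Fin nm → ℝ) (hθ : simplexPt θ)
    (lam : Fin nu → ℝ) (hlam : lam ∈ lamSet nu β)
    (w : Fin nc → ℝ) (hw : simplexPt w) :
    l1 (fun x => M.Tflow (fun p : X × A => ∑ i, θ i * Φ i p) x - M.ν x)
      ≤ epsSad M Φ Ψ c πE β θ lam w
        + 2 / (1 - M.γ) * linf (fun x => uA x - ∑ k, lamStar k * Ψ k x) := by
  classical
  have hγpos : (0:ℝ) < 1 - M.γ := by linarith [M.γ_lt_one]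
  have hβ0 : (0:ℝ) ≤ β := by linarith
  set μθ : X × A → ℝ := fun p : X × A => ∑ i, θ i * Φ i p with hμθdef
  have hμθ : IsDist μθ := by
    constructor
    · exact fun p => Finset.sum_nonneg fun i _ => mul_nonneg (hθ.1 i) ((hΦ i).1 p)
    · simp only [hμθdef]
      rw [Finset.sum_comm]
      have h2 : ∀ i, ∑ p : X × A, θ i * Φ i p = θ i := by
        intro i; rw [← Finset.mul_sum, (hΦ i).2, mul_one]
      simp only [h2]
      exact hθ.2
  set Δ : X → ℝ := fun x => M.Tflow μθ x - M.ν x with hΔdef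
  set sgn : X → ℝ := fun x => if 0 ≤ Δ x then 1 else -1 with hsgndef
  have hsgnabs : ∀ x, |sgn x| = 1 := by
    intro x; simp only [hsgndef]; split <;> simp
  have hΔsgn : ∀ x, Δ x * sgn x = |Δ x| := by
    intro x; simp only [hsgndef]
    split
    · rw [mul_one, abs_of_nonneg ‹_›]
    · rw [abs_of_neg (lt_of_not_ge ‹_›)]; ring
  set u : X → ℝ := fun x => uA x - sgn x with hudef
  have hu2 : ∀ x, |u x| ≤ 2 := by
    intro x
    calc |u x| ≤ |uA x| + |sgn x| := abs_sub _ _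
      _ ≤ 1 + 1 := add_le_add (hVbound x) (hsgnabs x).le
      _ = 2 := by norm_num
  obtain ⟨lamP, hlamPmem, hlamPeq⟩ := hcoh θ hθ u hu2
  have hlamPeq' : ∑ x, (M.ν x - M.Tflow μθ x) * (u x - ∑ k, lamP k * Ψ k x) = 0 := hlamPeq
  -- pairing consequence
  have hκ : ∀ f : X → ℝ,
      ∑ p : X × A, (μθ p - M.occ πE p) * M.Tadj f p = ∑ x, Δ x * f x := by
    intro f
    have e : ∀ p : X × A, (μθ p - M.occ πE p) * M.Tadj f p
        = μθ p * M.Tadj f p - M.occ πE p * M.Tadj f p := fun p => by ring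
    simp only [e, Finset.sum_sub_distrib]
    rw [ProofAux.pairing M μθ f, ProofAux.pairing M (M.occ πE) f,
      ← Finset.sum_sub_distrib]
    refine Finset.sum_congr rfl fun x _ => ?_
    rw [ProofAux.Tflow_occ M πE hπE x]
    simp only [hΔdef]
    ring
  -- splitting the Lagrangian
  have hLr : ∀ (lam'' : Fin nu → ℝ) (w'' : Fin nc → ℝ),
      Lr M Φ Ψ c πE θ lam'' w''
        = (∑ p : X × A, (μθ p - M.occ πE p) * (∑ j, w'' j * c j p))
          - ∑ x, Δ x * (∑ k, lam'' k * Ψ k x) := by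
    intro lam'' w''
    rw [← hκ (fun x => ∑ k, lam'' k * Ψ k x), ← Finset.sum_sub_distrib]
    unfold Lr
    refine Finset.sum_congr rfl fun p _ => ?_
    simp only [hμθdef]
    ring
  -- coherence rearranged
  have h0 : ∑ x, Δ x * (u x - ∑ k, lamP k * Ψ k x) = 0 := by
    have hneg : ∑ x, Δ x * (u x - ∑ k, lamP k * Ψ k x)
        = -∑ x, (M.ν x - M.Tflow μθ x) * (u x - ∑ k, lamP k * Ψ k x) := by
      rw [← Finset.sum_neg_distrib]
      refine Finset.sum_congr rfl fun x _ => ?_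
      simp only [hΔdef]
      ring
    rw [hneg, hlamPeq', neg_zero]
  have hc' : ∑ x, Δ x * (∑ k, lamP k * Ψ k x) = ∑ x, Δ x * u x := by
    have := h0
    rw [show ∑ x, Δ x * (u x - ∑ k, lamP k * Ψ k x)
        = (∑ x, Δ x * u x) - ∑ x, Δ x * (∑ k, lamP k * Ψ k x) by
      rw [← Finset.sum_sub_distrib]
      exact Finset.sum_congr rfl fun x _ => by ring] at this
    linarith
  have hu' : ∑ x, Δ x * u x = (∑ x, Δ x * uA x) - ∑ x, |Δ x| := by
    rw [← Finset.sum_sub_distrib]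
    refine Finset.sum_congr rfl fun x _ => ?_
    rw [← hΔsgn x]
    simp only [hudef]
    ring
  have hsplitStar : ∑ x, Δ x * (uA x - ∑ k, lamStar k * Ψ k x)
      = (∑ x, Δ x * uA x) - ∑ x, Δ x * (∑ k, lamStar k * Ψ k x) := by
    rw [← Finset.sum_sub_distrib]
    exact Finset.sum_congr rfl fun x _ => by ring
  -- difference identity
  have hdiff : Lr M Φ Ψ c πE θ lamP wStar - Lr M Φ Ψ c πE θ lamStar wStar
      = (∑ x, |Δ x|) - ∑ x, Δ x * (uA x - ∑ k, lamStar k * Ψ k x) := by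
    rw [hLr lamP wStar, hLr lamStar wStar, hc', hu', hsplitStar]
    ring
  -- sSup / sInf estimates
  set C : ℝ := (1 + ∑ p : X × A, |M.occ πE p|) * (1 + 2 * β / (1 - M.γ)) with hCdef
  have hbddA : BddAbove {v : ℝ | ∃ lam' ∈ lamSet nu β, ∃ w', simplexPt w' ∧
      v = Lr M Φ Ψ c πE θ lam' w'} := by
    refine ⟨C, fun v hv => ?_⟩
    obtain ⟨lam'', hlam'', w'', hw'', rfl⟩ := hv
    exact (le_abs_self _).trans (ProofAux.Lr_abs_le M Φ hΦ Ψ hΨ c hc β hβ0 πE hθ hlam'' hw'')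
  have hbddB : BddBelow {v : ℝ | ∃ θ', simplexPt θ' ∧
      v = Lr M Φ Ψ c πE θ' lamStar wStar} := by
    refine ⟨-C, fun v hv => ?_⟩
    obtain ⟨θ'', hθ'', rfl⟩ := hv
    exact (abs_le.mp (ProofAux.Lr_abs_le M Φ hΦ Ψ hΨ c hc β hβ0 πE hθ'' hlamStar hwStar)).1
  have hup : Lr M Φ Ψ c πE θ lamP wStar ≤ sSup {v : ℝ | ∃ lam' ∈ lamSet nu β, ∃ w',
      simplexPt w' ∧ v = Lr M Φ Ψ c πE θ lam' w'} :=
    le_csSup hbddA ⟨lamP, hlamPmem, wStar, hwStar, rfl⟩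
  have hinf1 : sInf {v : ℝ | ∃ θ', simplexPt θ' ∧ v = Lr M Φ Ψ c πE θ' lam w}
      ≤ sInf {v : ℝ | ∃ θ', simplexPt θ' ∧ v = Lr M Φ Ψ c πE θ' lamStar wStar} :=
    hstar lam hlam w hw
  have hinf2 : sInf {v : ℝ | ∃ θ', simplexPt θ' ∧ v = Lr M Φ Ψ c πE θ' lamStar wStar}
      ≤ Lr M Φ Ψ c πE θ lamStar wStar :=
    csInf_le hbddB ⟨θ, hθ, rfl⟩
  have heps : Lr M Φ Ψ c πE θ lamP wStar - Lr M Φ Ψ c πE θ lamStar wStar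
      ≤ epsSad M Φ Ψ c πE β θ lam w := by
    unfold epsSad
    linarith
  -- final bounds
  have hl1b : ∑ x, |Δ x| ≤ 2 / (1 - M.γ) := ProofAux.l1_flow_le M μθ hμθ
  have hlinf0 : 0 ≤ linf (fun x => uA x - ∑ k, lamStar k * Ψ k x) := by
    obtain ⟨x0⟩ := (inferInstance : Nonempty X)
    exact (abs_nonneg _).trans (ProofAux.abs_le_linf _ x0)
  have hfin : ∑ x, Δ x * (uA x - ∑ k, lamStar k * Ψ k x)
      ≤ (∑ x, |Δ x|) * linf (fun x => uA x - ∑ k, lamStar k * Ψ k x) := by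
    rw [Finset.sum_mul]
    refine Finset.sum_le_sum fun x _ => ?_
    calc Δ x * (uA x - ∑ k, lamStar k * Ψ k x)
        ≤ |Δ x * (uA x - ∑ k, lamStar k * Ψ k x)| := le_abs_self _
      _ = |Δ x| * |uA x - ∑ k, lamStar k * Ψ k x| := abs_mul _ _
      _ ≤ |Δ x| * linf (fun x => uA x - ∑ k, lamStar k * Ψ k x) :=
          mul_le_mul_of_nonneg_left
            (ProofAux.abs_le_linf (fun x => uA x - ∑ k, lamStar k * Ψ k x) x) (abs_nonneg _)
  have hfin2 : ∑ x, Δ x * (uA x - ∑ k, lamStar k * Ψ k x)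
      ≤ 2 / (1 - M.γ) * linf (fun x => uA x - ∑ k, lamStar k * Ψ k x) :=
    hfin.trans (mul_le_mul_of_nonneg_right hl1b hlinf0)
  have hl1 : l1 Δ = ∑ x, |Δ x| := rfl
  rw [hl1]
  linarith [hdiff, heps, hfin2]
end
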